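/- arXiv:1611.01593 — 4 statements merged into one kernel-verified Lean document; each statement's English description precedes it below -/
import Mathlib

section
/- For a function f : ℂ → ℂ continuous on the real axis {z ∈ ℂ : Im z = 0}, the following statements are equivalent: (a) for every complex Hilbert space H and all bounded self-adjoint operators A, B on H, ‖f(A) − f(B)‖ ≤ ‖A − B‖; (b) for every complex Hilbert space H, every bounded self-adjoint operator A on H and every bounded linear operator R on H, ‖f(A)R − Rf(A)‖ ≤ ‖AR − RA‖; (c) for every complex Hilbert space H, all bounded self-adjoint operators A, B on H and every bounded linear operator R on H, ‖f(A)R − Rf(B)‖ ≤ ‖AR − RB‖. -/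
/-!
Conjugating by a unitary `u` turns `‖f(a) - f(u a u*)‖ ≤ ‖a - u a u*‖` into
`‖[f(a), u]‖ ≤ ‖[a, u]‖`; differentiating this along `u = exp(i t s)` at `t = 0` gives
`‖[f(a), s]‖ ≤ ‖[a, s]‖` for every self-adjoint `s`. On `H ⊕ H`, the commutator of
`diag(a, b)` with the self-adjoint `[[0, r], [r*, 0]]` has the off-diagonal entries `ar - rb` and
`-(ar - rb)*`, so the self-adjoint case of (b) on `H ⊕ H` yields (c) on `H`. Finally (c)
specialises to (a) at `r = 1` and to (b) at `b = a`.
-/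

theorem HasDerivAt.norm_le_of_norm_sub_le {E F : Type*} [NormedAddCommGroup E] [NormedSpace ℝ E]
    [NormedAddCommGroup F] [NormedSpace ℝ F] {φ : ℝ → E} {ψ : ℝ → F} {φ' : E} {ψ' : F} {x : ℝ}
    (hφ : HasDerivAt φ φ' x) (hψ : HasDerivAt ψ ψ' x)
    (hle : ∀ t, ‖φ t - φ x‖ ≤ ‖ψ t - ψ x‖) : ‖φ'‖ ≤ ‖ψ'‖ := by
  refine le_of_tendsto_of_tendsto' (hasDerivAt_iff_tendsto_slope.mp hφ).norm
    (hasDerivAt_iff_tendsto_slope.mp hψ).norm fun t => ?_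
  rw [slope_def_module, slope_def_module, norm_smul, norm_smul]
  exact mul_le_mul_of_nonneg_left (hle t) (norm_nonneg _)

section CStarAlgebra

variable {𝔄 : Type*} [CStarAlgebra 𝔄]

theorem norm_mul_unitary_sub_unitary_mul (x y : 𝔄) (u : unitary 𝔄) :
    ‖x * u - u * y‖ = ‖x - u * y * star (u : 𝔄)‖ := by
  rw [← CStarRing.norm_mul_coe_unitary (x - u * y * star (u : 𝔄)) u, sub_mul,
    mul_assoc _ (star (u : 𝔄)), Unitary.coe_star_mul_self, mul_one]

variable {f : ℂ → ℂ}

theorem cfc_unitary_conj (hf : ContinuousOn f {z | z.im = 0}) (u : unitary 𝔄) {a : 𝔄}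
    (ha : IsSelfAdjoint a) : cfc f (u * a * star (u : 𝔄)) = u * cfc f a * star (u : 𝔄) :=
  (StarAlgHomClass.map_cfc (Unitary.conjStarAlgAut ℂ 𝔄 u) f a
    (hf.mono fun _ => ha.im_eq_zero_of_mem_spectrum)
    ((continuous_const_mul _).mul continuous_const) ha.isStarNormal).symm

theorem norm_commutator_unitary_le (hf : ContinuousOn f {z | z.im = 0})
    (hlip : ∀ a b : 𝔄, IsSelfAdjoint a → IsSelfAdjoint b → ‖cfc f a - cfc f b‖ ≤ ‖a - b‖)
    {a : 𝔄} (ha : IsSelfAdjoint a) (u : unitary 𝔄) :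
    ‖cfc f a * u - u * cfc f a‖ ≤ ‖a * u - u * a‖ := by
  rw [norm_mul_unitary_sub_unitary_mul, norm_mul_unitary_sub_unitary_mul,
    ← cfc_unitary_conj hf u ha]
  exact hlip _ _ ha (ha.conjugate _)

open NormedSpace Complex in
theorem norm_commutator_le_of_isSelfAdjoint (hf : ContinuousOn f {z | z.im = 0})
    (hlip : ∀ a b : 𝔄, IsSelfAdjoint a → IsSelfAdjoint b → ‖cfc f a - cfc f b‖ ≤ ‖a - b‖)
    {a s : 𝔄} (ha : IsSelfAdjoint a) (hs : IsSelfAdjoint s) :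
    ‖cfc f a * s - s * cfc f a‖ ≤ ‖a * s - s * a‖ := by
  let u : ℝ → unitary 𝔄 := fun t => selfAdjoint.expUnitary (t • ⟨s, hs⟩)
  have hu : HasDerivAt (fun t => (u t : 𝔄)) (I • s) 0 := by
    convert hasDerivAt_exp_smul_const (𝕂 := ℝ) (I • s) 0 using 1
    · ext t
      simp [u, smul_comm (t : ℝ) I s]
    · simp
  have hcomm (x : 𝔄) :
      HasDerivAt (fun t => x * u t - u t * x) (x * (I • s) - (I • s) * x) 0 :=
    (hu.const_mul x).sub (hu.mul_const x)
  have := (hcomm (cfc f a)).norm_le_of_norm_sub_le (hcomm a) fun t => by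
    simpa [u] using norm_commutator_unitary_le hf hlip ha (u t)
  simpa [mul_smul_comm, smul_mul_assoc, ← smul_sub, norm_smul] using this

end CStarAlgebra

namespace BlockOperator

open ContinuousLinearMap

variable {H : Type*} [NormedAddCommGroup H] [InnerProductSpace ℂ H]

local notation "E" => WithLp 2 (H × H)

noncomputable def swap : E →L[ℂ] E := LinearIsometryEquiv.withLpProdComm 2 ℂ H H

@[simp]
theorem swap_apply (x : E) : (swap : E →L[ℂ] E) x = WithLp.toLp 2 (x.snd, x.fst) := rfl

variable [CompleteSpace H]

noncomputable def diag : (H →L[ℂ] H) × (H →L[ℂ] H) →⋆ₐ[ℂ] (E →L[ℂ] E) where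
  toFun p := (WithLp.prodContinuousLinearEquiv 2 ℂ H H).symm.toContinuousLinearMap ∘L
    p.1.prodMap p.2 ∘L (WithLp.prodContinuousLinearEquiv 2 ℂ H H).toContinuousLinearMap
  map_one' := rfl
  map_mul' _ _ := rfl
  map_zero' := rfl
  map_add' _ _ := rfl
  commutes' _ := rfl
  map_star' p := by
    rw [star_eq_adjoint, eq_adjoint_iff]
    intro x y
    simp [WithLp.prod_inner_apply, star_eq_adjoint, adjoint_inner_left]

@[simp]
theorem diag_apply (p : (H →L[ℂ] H) × (H →L[ℂ] H)) (x : E) :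
    diag p x = WithLp.toLp 2 (p.1 x.fst, p.2 x.snd) := rfl

theorem diag_injective : Function.Injective (diag (H := H)) := by
  intro p q h
  ext x : 2
  · simpa using congr(($h (WithLp.toLp 2 (x, 0))).fst)
  · simpa using congr(($h (WithLp.toLp 2 (0, x))).snd)

theorem norm_diag (p : (H →L[ℂ] H) × (H →L[ℂ] H)) : ‖diag p‖ = ‖p‖ :=
  NonUnitalStarAlgHom.norm_map (diag (H := H)) diag_injective p

theorem cfc_diag {f : ℂ → ℂ} (hf : ContinuousOn f {z | z.im = 0}) {a b : H →L[ℂ] H}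
    (ha : IsSelfAdjoint a) (hb : IsSelfAdjoint b) :
    cfc f (diag (a, b)) = diag (cfc f a, cfc f b) := by
  have hab : IsSelfAdjoint (a, b) := Prod.ext ha.star_eq hb.star_eq
  rw [← cfc_map_prod (S := ℂ) f a b
    (hf.mono fun _ hz => hz.elim ha.im_eq_zero_of_mem_spectrum hb.im_eq_zero_of_mem_spectrum)]
  exact (StarAlgHomClass.map_cfc diag f (a, b) (hf.mono fun _ => hab.im_eq_zero_of_mem_spectrum)
    (NonUnitalStarAlgHom.isometry (diag (H := H)) diag_injective).continuous).symm

theorem swap_mem_unitary : (swap : E →L[ℂ] E) ∈ unitary (E →L[ℂ] E) :=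
  (Unitary.linearIsometryEquiv.symm (LinearIsometryEquiv.withLpProdComm 2 ℂ H H)).prop

theorem star_swap : star (swap : E →L[ℂ] E) = swap := by
  rw [star_eq_adjoint, eq_comm, eq_adjoint_iff]
  intro x y
  simp [WithLp.prod_inner_apply, add_comm]

theorem swap_mul_diag (p : (H →L[ℂ] H) × (H →L[ℂ] H)) :
    swap * diag p = diag p.swap * swap := rfl

theorem isSelfAdjoint_diag_mul_swap (r : H →L[ℂ] H) :
    IsSelfAdjoint (diag (r, star r) * swap) := by
  rw [IsSelfAdjoint, star_mul, star_swap, ← map_star, swap_mul_diag]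
  simp [Prod.star_def]

theorem norm_diag_mul_swap (p : (H →L[ℂ] H) × (H →L[ℂ] H)) :
    ‖diag p * swap‖ = ‖p‖ := by
  rw [CStarRing.norm_mul_mem_unitary (diag p) swap_mem_unitary, norm_diag]

theorem diag_mul_diag_mul_swap_sub (a b r s : H →L[ℂ] H) :
    diag (a, b) * (diag (r, s) * swap) - diag (r, s) * swap * diag (a, b) =
      diag (a * r - r * b, b * s - s * a) * swap := by
  rw [mul_assoc (diag _), swap_mul_diag, ← mul_assoc, ← mul_assoc, ← sub_mul, ← map_mul,
    ← map_mul, ← map_sub]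
  rfl

end BlockOperator

open BlockOperator in
theorem norm_cfc_mul_sub_mul_cfc_le {H : Type*} [NormedAddCommGroup H] [InnerProductSpace ℂ H]
    [CompleteSpace H] {f : ℂ → ℂ} (hf : ContinuousOn f {z | z.im = 0})
    (hcomm : ∀ a s : WithLp 2 (H × H) →L[ℂ] WithLp 2 (H × H), IsSelfAdjoint a →
      IsSelfAdjoint s → ‖cfc f a * s - s * cfc f a‖ ≤ ‖a * s - s * a‖)
    {a b : H →L[ℂ] H} (ha : IsSelfAdjoint a) (hb : IsSelfAdjoint b) (r : H →L[ℂ] H) :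
    ‖cfc f a * r - r * cfc f b‖ ≤ ‖a * r - r * b‖ := by
  have hab : IsSelfAdjoint (diag (a, b)) := IsSelfAdjoint.map (Prod.ext ha.star_eq hb.star_eq) diag
  have h := hcomm _ _ hab (isSelfAdjoint_diag_mul_swap r)
  rw [cfc_diag hf ha hb, diag_mul_diag_mul_swap_sub, diag_mul_diag_mul_swap_sub,
    norm_diag_mul_swap, norm_diag_mul_swap, Prod.norm_mk, Prod.norm_mk] at h
  have hstar : b * star r - star r * a = -star (a * r - r * b) := by
    rw [star_sub, star_mul, star_mul, ha.star_eq, hb.star_eq, neg_sub]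
  rw [hstar, norm_neg, norm_star, max_self] at h
  exact (le_max_left _ _).trans h

/-- For `f : ℂ → ℂ` continuous on the real axis, the following are equivalent:
(a) `‖f(A) - f(B)‖ ≤ ‖A - B‖` for all bounded self-adjoint `A`, `B`;
(b) `‖f(A)R - Rf(A)‖ ≤ ‖AR - RA‖` for every bounded self-adjoint `A` and every
bounded operator `R`;
(c) `‖f(A)R - Rf(B)‖ ≤ ‖AR - RB‖` for all bounded self-adjoint `A`, `B` and
every bounded operator `R`. -/
theorem stmt_9 (f : ℂ → ℂ) (hf : ContinuousOn f {z : ℂ | z.im = 0}) :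
    ((∀ (H : Type) [NormedAddCommGroup H] [InnerProductSpace ℂ H] [CompleteSpace H]
        (A B : H →L[ℂ] H), IsSelfAdjoint A → IsSelfAdjoint B →
        ‖cfc f A - cfc f B‖ ≤ ‖A - B‖) ↔
      (∀ (H : Type) [NormedAddCommGroup H] [InnerProductSpace ℂ H] [CompleteSpace H]
        (A R : H →L[ℂ] H), IsSelfAdjoint A →
        ‖cfc f A * R - R * cfc f A‖ ≤ ‖A * R - R * A‖)) ∧
    ((∀ (H : Type) [NormedAddCommGroup H] [InnerProductSpace ℂ H] [CompleteSpace H]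
        (A R : H →L[ℂ] H), IsSelfAdjoint A →
        ‖cfc f A * R - R * cfc f A‖ ≤ ‖A * R - R * A‖) ↔
      (∀ (H : Type) [NormedAddCommGroup H] [InnerProductSpace ℂ H] [CompleteSpace H]
        (A B R : H →L[ℂ] H), IsSelfAdjoint A → IsSelfAdjoint B →
        ‖cfc f A * R - R * cfc f B‖ ≤ ‖A * R - R * B‖)) := by
  refine ⟨⟨fun hlip H _ _ _ A R hA => ?_, fun hcomm H _ _ _ A B hA hB => ?_⟩,
    fun hcomm H _ _ _ A B R hA hB => ?_, fun h H _ _ _ A R hA => h H A A R hA hA⟩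
  · exact norm_cfc_mul_sub_mul_cfc_le hf
      (fun _ _ => norm_commutator_le_of_isSelfAdjoint hf (hlip (WithLp 2 (H × H)))) hA hA R
  · simpa only [mul_one, one_mul] using
      norm_cfc_mul_sub_mul_cfc_le hf (fun a s ha _ => hcomm (WithLp 2 (H × H)) a s ha) hA hB 1
  · exact norm_cfc_mul_sub_mul_cfc_le hf (fun a s ha _ => hcomm (WithLp 2 (H × H)) a s ha) hA hB R
end

section
/- Let F be a closed subset of ℂ and let f : ℂ → ℂ be continuous on F. The following statements are equivalent: (a) for every complex Hilbert space H, every bounded normal operator N on H with spectrum in F and every bounded linear operator R on H, ‖f(N)R − Rf(N)‖ ≤ ‖NR − RN‖; (b) for every complex Hilbert space H, all bounded normal operators N₁, N₂ on H with spectra in F and every bounded linear operator R on H, ‖f(N₁)R − Rf(N₂)‖ ≤ ‖N₁R − RN₂‖; (c) for every complex Hilbert space H, all bounded normal operators N₁, N₂ on H with spectra in F and every bounded self-adjoint operator A on H, ‖f(N₁)A − Af(N₂)‖ ≤ ‖N₁A − AN₂‖. -/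
/-!
Doubling trick on `H ⊕ H`. For the normal operator `N₁ ⊕ N₂` one has
`f(N₁ ⊕ N₂) = f(N₁) ⊕ f(N₂)`, and its commutator with the corner operator `!![0, R; 0, 0]` is
`!![0, N₁R - RN₂; 0, 0]`, whose norm is `‖N₁R - RN₂‖`; so (a) on `H ⊕ H` gives (b) on `H`.
For (c) ⇒ (b) use the self-adjoint `!![0, R; R⋆, 0]` instead, and the normal operators
`N₁ ⊕ μ` and `μ ⊕ N₂` for a scalar `μ ∈ σ(N₁)`: since `μ` commutes with `R⋆`, the lower corner of
`(N₁ ⊕ μ) A - A (μ ⊕ N₂)` vanishes, and `f(μ) = f(μ) • 1` again commutes with `R⋆`.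
-/

lemma WithLp.prod_ext {p : ENNReal} {α β : Type*} {x y : WithLp p (α × β)}
    (h₁ : x.fst = y.fst) (h₂ : x.snd = y.snd) : x = y :=
  WithLp.ofLp_injective p (Prod.ext h₁ h₂)

instance Prod.isStarNormal {A B : Type*} [Mul A] [Star A] [Mul B] [Star B] (a : A) (b : B)
    [IsStarNormal a] [IsStarNormal b] : IsStarNormal (a, b) :=
  ⟨Commute.prod (star_comm_self' a) (star_comm_self' b)⟩

namespace ContinuousLinearMap

section RCLike
variable {𝕜 H : Type*} [RCLike 𝕜] [NormedAddCommGroup H] [InnerProductSpace 𝕜 H]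

def fromBlocks (A B C D : H →L[𝕜] H) : WithLp 2 (H × H) →L[𝕜] WithLp 2 (H × H) :=
  (WithLp.prodContinuousLinearEquiv 2 𝕜 H H).symm ∘L
    ((A ∘L WithLp.fstL 2 𝕜 H H + B ∘L WithLp.sndL 2 𝕜 H H).prod
      (C ∘L WithLp.fstL 2 𝕜 H H + D ∘L WithLp.sndL 2 𝕜 H H))

variable (A B C D A' B' C' D' : H →L[𝕜] H)

@[simp] lemma fromBlocks_apply_fst (x : WithLp 2 (H × H)) :
    (fromBlocks A B C D x).fst = A x.fst + B x.snd := rfl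

@[simp] lemma fromBlocks_apply_snd (x : WithLp 2 (H × H)) :
    (fromBlocks A B C D x).snd = C x.fst + D x.snd := rfl

lemma fromBlocks_mul : fromBlocks A B C D * fromBlocks A' B' C' D' =
    fromBlocks (A * A' + B * C') (A * B' + B * D') (C * A' + D * C') (C * B' + D * D') := by
  ext x : 1
  refine WithLp.prod_ext ?_ ?_ <;>
    simp only [mul_apply_eq_comp, fromBlocks_apply_fst, fromBlocks_apply_snd, map_add,
      add_apply] <;>
    abel

lemma fromBlocks_sub : fromBlocks A B C D - fromBlocks A' B' C' D' =
    fromBlocks (A - A') (B - B') (C - C') (D - D') := by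
  ext x : 1
  refine WithLp.prod_ext ?_ ?_ <;>
    simp only [sub_apply, WithLp.sub_fst, WithLp.sub_snd, fromBlocks_apply_fst,
      fromBlocks_apply_snd] <;>
    abel

lemma star_fromBlocks [CompleteSpace H] :
    star (fromBlocks A B C D) = fromBlocks (star A) (star C) (star B) (star D) := by
  simp only [star_eq_adjoint]
  refine ((eq_adjoint_iff _ _).mpr fun x y => ?_).symm
  simp only [WithLp.prod_inner_apply, WithLp.ofLp_fst, WithLp.ofLp_snd, fromBlocks_apply_fst,
    fromBlocks_apply_snd, inner_add_left, inner_add_right, adjoint_inner_left]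
  abel

lemma fromBlocks_zero_zero_zero_apply (x : WithLp 2 (H × H)) :
    fromBlocks 0 B 0 0 x = WithLp.toLp 2 (B x.snd, 0) :=
  WithLp.prod_ext (by simp) (by simp)

lemma norm_fromBlocks_zero_zero_zero : ‖fromBlocks 0 B 0 (0 : H →L[𝕜] H)‖ = ‖B‖ := by
  refine le_antisymm (opNorm_le_bound _ (norm_nonneg B) fun x => ?_)
    (opNorm_le_bound _ (norm_nonneg _) fun y => ?_)
  · rw [fromBlocks_zero_zero_zero_apply, WithLp.norm_toLp_fst]
    exact B.le_opNorm _ |>.trans (by gcongr; exact WithLp.norm_snd_le H x)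
  · simpa [fromBlocks_zero_zero_zero_apply] using
      (fromBlocks 0 B 0 0).le_opNorm (WithLp.toLp 2 (0, y))

lemma norm_fromBlocks_diag_mul_sub_mul_fromBlocks_diag {P Q P' Q' X Y : H →L[𝕜] H}
    (h : Q * Y = Y * P') :
    ‖fromBlocks P 0 0 Q * fromBlocks 0 X Y 0 - fromBlocks 0 X Y 0 * fromBlocks P' 0 0 Q'‖ =
      ‖P * X - X * Q'‖ := by
  simp only [fromBlocks_mul, fromBlocks_sub, mul_zero, zero_mul, add_zero, zero_add, h,
    sub_self, norm_fromBlocks_zero_zero_zero]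

variable (𝕜 H) in
def fromBlocksDiagStarAlgHom [CompleteSpace H] :
    (H →L[𝕜] H) × (H →L[𝕜] H) →⋆ₐ[𝕜] (WithLp 2 (H × H) →L[𝕜] WithLp 2 (H × H)) where
  toFun P := fromBlocks P.1 0 0 P.2
  map_one' := by ext x : 1; exact WithLp.prod_ext (by simp) (by simp)
  map_mul' P Q := by simp [fromBlocks_mul]
  map_zero' := by ext x : 1; exact WithLp.prod_ext (by simp) (by simp)
  map_add' P Q := by ext x : 1; exact WithLp.prod_ext (by simp) (by simp)
  commutes' c := by ext x : 1; exact WithLp.prod_ext (by simp) (by simp)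
  map_star' P := by simp [star_fromBlocks]

end RCLike

section Complex

variable {H : Type*} [NormedAddCommGroup H] [InnerProductSpace ℂ H] [CompleteSpace H]
  (P Q : H →L[ℂ] H)

instance isStarNormal_fromBlocks_diag [IsStarNormal P] [IsStarNormal Q] :
    IsStarNormal (fromBlocks P 0 0 Q) :=
  IsStarNormal.map (fromBlocksDiagStarAlgHom ℂ H) (P, Q)

lemma spectrum_fromBlocks_diag_subset :
    spectrum ℂ (fromBlocks P 0 0 Q) ⊆ spectrum ℂ P ∪ spectrum ℂ Q :=
  (AlgHom.spectrum_apply_subset (fromBlocksDiagStarAlgHom ℂ H) (P, Q)).trans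
    (Prod.spectrum_eq P Q).subset

open scoped CStarAlgebra in
lemma cfc_fromBlocks_diag (f : ℂ → ℂ) [IsStarNormal P] [IsStarNormal Q]
    (hf : ContinuousOn f (spectrum ℂ P ∪ spectrum ℂ Q)) :
    cfc f (fromBlocks P 0 0 Q) = fromBlocks (cfc f P) 0 0 (cfc f Q) := by
  have := (fromBlocksDiagStarAlgHom ℂ H).map_cfc f (P, Q) (by rwa [Prod.spectrum_eq])
    (map_continuous _)
  rw [cfc_map_prod (S := ℂ) f P Q hf] at this
  exact this.symm

end Complex
end ContinuousLinearMap

open ContinuousLinearMap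

theorem stmt_11_general (F : Set ℂ) (f : ℂ → ℂ) (hf : ContinuousOn f F) :
    List.TFAE
      [ (∀ (H : Type) [NormedAddCommGroup H] [InnerProductSpace ℂ H] [CompleteSpace H]
          (N R : H →L[ℂ] H), IsStarNormal N → spectrum ℂ N ⊆ F →
          ‖cfc f N * R - R * cfc f N‖ ≤ ‖N * R - R * N‖),
        (∀ (H : Type) [NormedAddCommGroup H] [InnerProductSpace ℂ H] [CompleteSpace H]
          (N₁ N₂ R : H →L[ℂ] H), IsStarNormal N₁ → IsStarNormal N₂ →
          spectrum ℂ N₁ ⊆ F → spectrum ℂ N₂ ⊆ F →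
          ‖cfc f N₁ * R - R * cfc f N₂‖ ≤ ‖N₁ * R - R * N₂‖),
        (∀ (H : Type) [NormedAddCommGroup H] [InnerProductSpace ℂ H] [CompleteSpace H]
          (N₁ N₂ A : H →L[ℂ] H), IsStarNormal N₁ → IsStarNormal N₂ →
          spectrum ℂ N₁ ⊆ F → spectrum ℂ N₂ ⊆ F → IsSelfAdjoint A →
          ‖cfc f N₁ * A - A * cfc f N₂‖ ≤ ‖N₁ * A - A * N₂‖) ] := by
  tfae_have 1 → 2 := by
    intro h H _ _ _ N₁ N₂ R _ _ hN₁ hN₂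
    have := h _ (fromBlocks N₁ 0 0 N₂) (fromBlocks 0 R 0 0) inferInstance
      ((spectrum_fromBlocks_diag_subset N₁ N₂).trans (Set.union_subset hN₁ hN₂))
    rwa [cfc_fromBlocks_diag N₁ N₂ f (hf.mono (Set.union_subset hN₁ hN₂)),
      norm_fromBlocks_diag_mul_sub_mul_fromBlocks_diag (by simp),
      norm_fromBlocks_diag_mul_sub_mul_fromBlocks_diag (by simp)] at this
  tfae_have 2 → 3 := fun h H _ _ _ N₁ N₂ A hN₁ hN₂ hF₁ hF₂ _ => h H N₁ N₂ A hN₁ hN₂ hF₁ hF₂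
  tfae_have 3 → 2 := by
    intro h H _ _ _ N₁ N₂ R _ _ hN₁ hN₂
    cases subsingleton_or_nontrivial H
    · simp [Subsingleton.elim R 0]
    obtain ⟨μ, hμ⟩ := spectrum.nonempty N₁
    set c := algebraMap ℂ (H →L[ℂ] H) μ
    have : IsStarNormal c := cfc_predicate_algebraMap μ
    have hc : spectrum ℂ c ⊆ F :=
      (CFC.spectrum_algebraMap_subset μ).trans (Set.singleton_subset_iff.mpr (hN₁ hμ))
    have := h _ (fromBlocks N₁ 0 0 c) (fromBlocks c 0 0 N₂) (fromBlocks 0 R (star R) 0)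
      inferInstance inferInstance
      ((spectrum_fromBlocks_diag_subset N₁ c).trans (Set.union_subset hN₁ hc))
      ((spectrum_fromBlocks_diag_subset c N₂).trans (Set.union_subset hc hN₂))
      (by simp [IsSelfAdjoint, star_fromBlocks])
    rwa [cfc_fromBlocks_diag N₁ c f (hf.mono (Set.union_subset hN₁ hc)),
      cfc_fromBlocks_diag c N₂ f (hf.mono (Set.union_subset hc hN₂)), cfc_algebraMap,
      norm_fromBlocks_diag_mul_sub_mul_fromBlocks_diag (Algebra.commutes _ _),
      norm_fromBlocks_diag_mul_sub_mul_fromBlocks_diag (Algebra.commutes _ _)] at this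
  tfae_have 2 → 1 := fun h H _ _ _ N R hN hF => h H N N R hN hN hF hF
  tfae_finish

/-- Let `F ⊆ ℂ` be closed and `f : ℂ → ℂ` continuous on `F`. The following are
equivalent:
(a) `‖f(N)R - Rf(N)‖ ≤ ‖NR - RN‖` for every bounded normal `N` with spectrum in
`F` and every bounded operator `R`;
(b) `‖f(N₁)R - Rf(N₂)‖ ≤ ‖N₁R - RN₂‖` for all bounded normal `N₁`, `N₂` with
spectra in `F` and every bounded operator `R`;
(c) `‖f(N₁)A - Af(N₂)‖ ≤ ‖N₁A - AN₂‖` for all bounded normal `N₁`, `N₂` with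
spectra in `F` and every bounded self-adjoint operator `A`. -/
theorem stmt_11 (F : Set ℂ) (hF : IsClosed F) (f : ℂ → ℂ) (hf : ContinuousOn f F) :
    List.TFAE
      [ (∀ (H : Type) [NormedAddCommGroup H] [InnerProductSpace ℂ H] [CompleteSpace H]
          (N R : H →L[ℂ] H), IsStarNormal N → spectrum ℂ N ⊆ F →
          ‖cfc f N * R - R * cfc f N‖ ≤ ‖N * R - R * N‖),
        (∀ (H : Type) [NormedAddCommGroup H] [InnerProductSpace ℂ H] [CompleteSpace H]
          (N₁ N₂ R : H →L[ℂ] H), IsStarNormal N₁ → IsStarNormal N₂ →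
          spectrum ℂ N₁ ⊆ F → spectrum ℂ N₂ ⊆ F →
          ‖cfc f N₁ * R - R * cfc f N₂‖ ≤ ‖N₁ * R - R * N₂‖),
        (∀ (H : Type) [NormedAddCommGroup H] [InnerProductSpace ℂ H] [CompleteSpace H]
          (N₁ N₂ A : H →L[ℂ] H), IsStarNormal N₁ → IsStarNormal N₂ →
          spectrum ℂ N₁ ⊆ F → spectrum ℂ N₂ ⊆ F → IsSelfAdjoint A →
          ‖cfc f N₁ * A - A * cfc f N₂‖ ≤ ‖N₁ * A - A * N₂‖) ] :=
  stmt_11_general F f hf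
end

section
/- Pointwise boundedness of difference quotients implies local operator Lipschitzness: Let f : ℝ → ℂ be continuous, and write f(A) for the continuous functional calculus of a bounded self-adjoint operator A applied to z ↦ f(Re z). Suppose that for every complex Hilbert space H and all bounded self-adjoint operators A and K on H there exist C ≥ 0 and δ > 0 such that ‖f(A + tK) − f(A)‖ ≤ C·|t| for all real t with |t| < δ. Then f is locally operator Lipschitz: for every a > 0 there exists C ≥ 0 such that for every complex Hilbert space H and all bounded self-adjoint operators A, B on H with ‖A‖ ≤ a and ‖B‖ ≤ a, ‖f(A) − f(B)‖ ≤ C·‖A − B‖. -/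
/-!
If `f` were not locally operator Lipschitz, there would be self-adjoint `Aₙ`, `Bₙ` of norm `≤ a`
on Hilbert spaces `Eₙ` with `‖f(Aₙ) - f(Bₙ)‖ > n ‖Aₙ - Bₙ‖`. Let `Kₙ` be the unit vector in the
direction `Bₙ - Aₙ`. Put all the points `Aₙ + v Kₙ`, `0 ≤ v ≤ ‖Bₙ - Aₙ‖`, on the diagonal of a
single operator on an `ℓ²`-sum of copies of the `Eₙ`, and the corresponding `Kₙ` on the diagonal
of a second one. Block-diagonal operators form a copy of `ℓ^∞` of the blocks, on which the
functional calculus acts blockwise, so the hypothesis for this one pair yields constants `C`, `δ`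
valid at every point of every segment. Walking along the segment from `Aₙ` to `Bₙ` in steps
shorter than `δ` gives `‖f(Bₙ) - f(Aₙ)‖ ≤ C ‖Bₙ - Aₙ‖`, which is absurd for `n > C`.
-/

open scoped ENNReal

noncomputable section

namespace lp

variable {ι : Type*}

theorem isSelfAdjoint_of_forall {E : ι → Type*} [∀ i, NormedAddCommGroup (E i)]
    [∀ i, StarAddMonoid (E i)] [∀ i, NormedStarGroup (E i)] {p : ℝ≥0∞} {x : lp E p}
    (hx : ∀ i, IsSelfAdjoint (x i)) : IsSelfAdjoint x :=
  lp.ext (funext hx)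

instance instCStarAlgebra {A : ι → Type*} [∀ i, Nontrivial (A i)] [∀ i, CStarAlgebra (A i)] :
    CStarAlgebra (lp A ∞) where

section CStarAlgebra

variable {A : ι → Type*} [∀ i, Nontrivial (A i)] [∀ i, CStarAlgebra (A i)]

def evalStarAlgHom (i : ι) : lp A ∞ →⋆ₐ[ℂ] A i where
  toFun x := x i
  map_one' := rfl
  map_mul' _ _ := rfl
  map_zero' := rfl
  map_add' _ _ := rfl
  commutes' _ := rfl
  map_star' _ := rfl

theorem infty_cfc_apply (f : ℂ → ℂ) (x : lp A ∞) (i : ι)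
    (hf : ContinuousOn f (spectrum ℂ x) := by cfc_cont_tac) (hx : IsStarNormal x := by cfc_tac) :
    cfc f x i = cfc f (x i) :=
  (evalStarAlgHom i).map_cfc f x hf (evalCLM ℂ A ∞ i).continuous hx (hx.map (evalStarAlgHom i))

end CStarAlgebra

variable {H : ι → Type*} [∀ i, NormedAddCommGroup (H i)]
  [∀ i, InnerProductSpace ℂ (H i)] [∀ i, CompleteSpace (H i)]

theorem norm_apply_apply_le_norm_smul (T : lp (fun i => H i →L[ℂ] H i) ∞) (v : lp H 2) (i : ι) :
    ‖T i (v i)‖ ≤ ‖(‖T‖ • v) i‖ := by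
  rw [lp.coeFn_smul, Pi.smul_apply, norm_smul, norm_norm]
  exact (T i).le_of_opNorm_le (norm_apply_le_norm ENNReal.top_ne_zero T i) (v i)

def blockDiagonalCLM (T : lp (fun i => H i →L[ℂ] H i) ∞) : lp H 2 →L[ℂ] lp H 2 :=
  LinearMap.mkContinuous
    { toFun v :=
        ⟨fun i => T i (v i), (lp.memℓp (‖T‖ • v)).mono' (norm_apply_apply_le_norm_smul T v)⟩
      map_add' v w := lp.ext <| funext fun i => map_add (T i) (v i) (w i)
      map_smul' c v := lp.ext <| funext fun i => map_smul (T i) c (v i) }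
    ‖T‖ fun v => by
      refine (lp.norm_mono two_ne_zero (y := ‖T‖ • v) (norm_apply_apply_le_norm_smul T v)).trans ?_
      rw [lp.norm_const_smul two_ne_zero, norm_norm]

@[simp]
theorem blockDiagonalCLM_apply (T : lp (fun i => H i →L[ℂ] H i) ∞) (v : lp H 2) (i : ι) :
    blockDiagonalCLM T v i = T i (v i) := rfl

theorem norm_blockDiagonalCLM (T : lp (fun i => H i →L[ℂ] H i) ∞) :
    ‖blockDiagonalCLM T‖ = ‖T‖ := by
  classical
  refine le_antisymm (LinearMap.mkContinuous_norm_le _ (norm_nonneg T) _)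
    (lp.norm_le_of_forall_le (norm_nonneg _) fun i => ?_)
  refine (T i).opNorm_le_bound (norm_nonneg _) fun v => ?_
  have hsingle : blockDiagonalCLM T (lp.single 2 i v) = lp.single 2 i (T i v) := by
    ext j
    rcases eq_or_ne j i with rfl | hj
    · simp only [blockDiagonalCLM_apply, lp.single_apply_self]
    · simp only [blockDiagonalCLM_apply, lp.single_apply_ne _ _ _ hj, map_zero]
  simpa only [hsingle, lp.norm_single two_pos] using
    (blockDiagonalCLM T).le_opNorm (lp.single 2 i v)

variable [∀ i, Nontrivial (H i)]

variable (H) in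
def blockDiagonal : lp (fun i => H i →L[ℂ] H i) ∞ →⋆ₐ[ℂ] (lp H 2 →L[ℂ] lp H 2) where
  toFun := blockDiagonalCLM
  map_one' := rfl
  map_mul' _ _ := rfl
  map_zero' := rfl
  map_add' _ _ := rfl
  commutes' _ := rfl
  map_star' T := by
    rw [ContinuousLinearMap.star_eq_adjoint, ContinuousLinearMap.eq_adjoint_iff]
    intro v w
    simp only [lp.inner_eq_tsum, blockDiagonalCLM_apply]
    exact tsum_congr fun i => ContinuousLinearMap.adjoint_inner_left (T i) (w i) (v i)

theorem norm_blockDiagonal (T : lp (fun i => H i →L[ℂ] H i) ∞) : ‖blockDiagonal H T‖ = ‖T‖ :=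
  norm_blockDiagonalCLM T

theorem continuous_blockDiagonal : Continuous (blockDiagonal H) :=
  AddMonoidHomClass.continuous_of_bound _ 1 fun T => by rw [norm_blockDiagonal, one_mul]

end lp

theorem norm_sub_le_of_uniform_local_bound {E : Type*} [SeminormedAddCommGroup E] {g : ℝ → E}
    {s C δ : ℝ} (hs : 0 ≤ s) (hδ : 0 < δ)
    (h : ∀ v ∈ Set.Icc 0 s, ∀ t, |t| < δ → ‖g (v + t) - g v‖ ≤ C * |t|) :
    ‖g s - g 0‖ ≤ C * s := by
  obtain ⟨m, hm⟩ := exists_nat_gt (s / δ)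
  have hm0 : (0 : ℝ) < m := (div_nonneg hs hδ.le).trans_lt hm
  set step := s / m
  have hstep : 0 ≤ step := div_nonneg hs hm0.le
  have hstepδ : step < δ := by rwa [div_lt_iff₀ hm0, mul_comm, ← div_lt_iff₀ hδ]
  have hmstep : m * step = s := mul_div_cancel₀ s hm0.ne'
  calc ‖g s - g 0‖ = dist (g ((0 : ℕ) * step)) (g (m * step)) := by
        rw [dist_comm, dist_eq_norm, hmstep, Nat.cast_zero, zero_mul]
    _ ≤ ∑ j ∈ Finset.range m, dist (g (j * step)) (g ((j + 1 : ℕ) * step)) :=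
        dist_le_range_sum_dist (fun j : ℕ => g (j * step)) m
    _ ≤ ∑ _j ∈ Finset.range m, C * step := by
        refine Finset.sum_le_sum fun j hj => ?_
        have hjm : (j : ℝ) + 1 ≤ m := by exact_mod_cast Finset.mem_range.1 hj
        have hv : (j : ℝ) * step ∈ Set.Icc 0 s :=
          ⟨by positivity, hmstep ▸ mul_le_mul_of_nonneg_right (by linarith) hstep⟩
        have := h _ hv step (by rwa [abs_of_nonneg hstep])
        rwa [abs_of_nonneg hstep, ← add_one_mul, ← Nat.cast_add_one, ← dist_eq_norm,
          dist_comm] at this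
    _ = C * s := by rw [Finset.sum_const, Finset.card_range, nsmul_eq_mul, ← hmstep]; ring

def HasBoundedDifferenceQuotients (f : ℝ → ℂ) : Prop :=
  ∀ (H : Type) [NormedAddCommGroup H] [InnerProductSpace ℂ H] [CompleteSpace H]
    (A K : H →L[ℂ] H), IsSelfAdjoint A → IsSelfAdjoint K →
    ∃ C : ℝ, 0 ≤ C ∧ ∃ δ : ℝ, 0 < δ ∧ ∀ t : ℝ, |t| < δ →
      ‖cfc (fun z : ℂ => f z.re) (A + (t : ℂ) • K) - cfc (fun z : ℂ => f z.re) A‖ ≤ C * |t|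

namespace HasBoundedDifferenceQuotients

variable {f : ℝ → ℂ} {ι : Type} {H : ι → Type} [∀ i, NormedAddCommGroup (H i)]
  [∀ i, InnerProductSpace ℂ (H i)] [∀ i, CompleteSpace (H i)] [∀ i, Nontrivial (H i)]

theorem exists_uniform_bound (hf : HasBoundedDifferenceQuotients f) (hfc : Continuous f)
    {A K : lp (fun i => H i →L[ℂ] H i) ∞} (hA : IsSelfAdjoint A) (hK : IsSelfAdjoint K) :
    ∃ C : ℝ, 0 ≤ C ∧ ∃ δ : ℝ, 0 < δ ∧ ∀ i (t : ℝ), |t| < δ →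
      ‖cfc (fun z : ℂ => f z.re) (A i + (t : ℂ) • K i) - cfc (fun z : ℂ => f z.re) (A i)‖
        ≤ C * |t| := by
  obtain ⟨C, hC, δ, hδ, hCδ⟩ := hf (lp H 2) (lp.blockDiagonal H A) (lp.blockDiagonal H K)
    (hA.map (lp.blockDiagonal H)) (hK.map (lp.blockDiagonal H))
  refine ⟨C, hC, δ, hδ, fun i t ht => ?_⟩
  have hg : Continuous fun z : ℂ => f z.re := hfc.comp Complex.continuous_re
  have hAt : IsSelfAdjoint (A + (t : ℂ) • K) :=
    hA.add ((show IsSelfAdjoint (t : ℂ) from Complex.conj_ofReal t).smul hK)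
  calc ‖cfc (fun z : ℂ => f z.re) (A i + (t : ℂ) • K i) - cfc (fun z : ℂ => f z.re) (A i)‖
      = ‖(cfc (fun z : ℂ => f z.re) (A + (t : ℂ) • K) - cfc (fun z : ℂ => f z.re) A) i‖ := by
        rw [lp.coeFn_sub, Pi.sub_apply, lp.infty_cfc_apply _ _ i hg.continuousOn hAt.isStarNormal,
          lp.infty_cfc_apply _ _ i hg.continuousOn hA.isStarNormal]
        rfl
    _ ≤ ‖cfc (fun z : ℂ => f z.re) (A + (t : ℂ) • K) - cfc (fun z : ℂ => f z.re) A‖ :=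
        lp.norm_apply_le_norm ENNReal.top_ne_zero _ i
    _ = ‖cfc (fun z : ℂ => f z.re) (lp.blockDiagonal H A + (t : ℂ) • lp.blockDiagonal H K)
          - cfc (fun z : ℂ => f z.re) (lp.blockDiagonal H A)‖ := by
        rw [← lp.norm_blockDiagonal, map_sub,
          (lp.blockDiagonal H).map_cfc _ _ hg.continuousOn lp.continuous_blockDiagonal
            hAt.isStarNormal (hAt.map (lp.blockDiagonal H)).isStarNormal,
          (lp.blockDiagonal H).map_cfc _ _ hg.continuousOn lp.continuous_blockDiagonal
            hA.isStarNormal (hA.map (lp.blockDiagonal H)).isStarNormal, map_add, map_smul]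
    _ ≤ C * |t| := hCδ t ht

theorem exists_lipschitz_bound (hf : HasBoundedDifferenceQuotients f) (hfc : Continuous f)
    {a : ℝ} (A B : ∀ i, H i →L[ℂ] H i) (hA : ∀ i, IsSelfAdjoint (A i))
    (hB : ∀ i, IsSelfAdjoint (B i)) (hAa : ∀ i, ‖A i‖ ≤ a) (hBa : ∀ i, ‖B i‖ ≤ a) :
    ∃ C : ℝ, 0 ≤ C ∧ ∀ i,
      ‖cfc (fun z : ℂ => f z.re) (A i) - cfc (fun z : ℂ => f z.re) (B i)‖ ≤ C * ‖A i - B i‖ := by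
  set s : ι → ℝ := fun i => ‖B i - A i‖
  set K : ∀ i, H i →L[ℂ] H i := fun i => (((s i)⁻¹ : ℝ) : ℂ) • (B i - A i)
  have hK : ∀ i, IsSelfAdjoint (K i) := fun i =>
    (show IsSelfAdjoint (((s i)⁻¹ : ℝ) : ℂ) from Complex.conj_ofReal _).smul ((hB i).sub (hA i))
  have hK1 : ∀ i, ‖K i‖ ≤ 1 := fun i => by
    rw [norm_smul, Complex.norm_real, norm_inv, norm_norm]
    exact inv_mul_le_one
  have hpath : ∀ i, A i + (s i : ℂ) • K i = B i := fun i => by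
    rcases eq_or_ne (s i) 0 with hs | hs
    · rw [hs, Complex.ofReal_zero, zero_smul, add_zero, eq_comm, ← sub_eq_zero, ← norm_eq_zero]
      exact hs
    · rw [smul_smul, ← Complex.ofReal_mul, mul_inv_cancel₀ hs, Complex.ofReal_one, one_smul,
        add_sub_cancel]
  let J := Σ i, Set.Icc (0 : ℝ) (s i)
  let T : lp (fun j : J => H j.1 →L[ℂ] H j.1) ∞ :=
    ⟨fun j => A j.1 + ((j.2 : ℝ) : ℂ) • K j.1, memℓp_infty ⟨a + 2 * a, by
      rintro _ ⟨⟨i, v, hv0, hvs⟩, rfl⟩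
      refine (norm_add_le _ _).trans (add_le_add (hAa i) ?_)
      rw [norm_smul, Complex.norm_real, Real.norm_eq_abs, abs_of_nonneg hv0]
      exact (mul_le_of_le_one_right hv0 (hK1 i)).trans
        (hvs.trans ((norm_sub_le _ _).trans (by linarith [hAa i, hBa i])))⟩⟩
  let L : lp (fun j : J => H j.1 →L[ℂ] H j.1) ∞ :=
    ⟨fun j => K j.1, memℓp_infty ⟨1, by rintro _ ⟨j, rfl⟩; exact hK1 j.1⟩⟩
  have hT : IsSelfAdjoint T := lp.isSelfAdjoint_of_forall fun j =>
    (hA j.1).add ((show IsSelfAdjoint ((j.2 : ℝ) : ℂ) from Complex.conj_ofReal _).smul (hK j.1))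
  have hL : IsSelfAdjoint L := lp.isSelfAdjoint_of_forall fun j => hK j.1
  obtain ⟨C, hC, δ, hδ, hCδ⟩ := hf.exists_uniform_bound hfc hT hL
  refine ⟨C, hC, fun i => ?_⟩
  have key := norm_sub_le_of_uniform_local_bound
    (g := fun v : ℝ => cfc (fun z : ℂ => f z.re) (A i + (v : ℂ) • K i)) (C := C)
    (norm_nonneg _) hδ
    fun v hv t ht => by
      rw [Complex.ofReal_add, add_smul, ← add_assoc]
      exact hCδ ⟨i, v, hv⟩ t ht
  rwa [hpath, Complex.ofReal_zero, zero_smul, add_zero, norm_sub_rev, norm_sub_rev (B i)] at key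

end HasBoundedDifferenceQuotients

end

/-- Pointwise boundedness of difference quotients implies local operator
Lipschitzness: let `f : ℝ → ℂ` be continuous. If for every complex Hilbert
space `H` and all bounded self-adjoint operators `A`, `K` on `H` there exist
`C ≥ 0` and `δ > 0` such that `‖f(A + tK) - f(A)‖ ≤ C * |t|` for `|t| < δ`,
then for every `a > 0` there exists `C ≥ 0` such that
`‖f(A) - f(B)‖ ≤ C * ‖A - B‖` for all bounded self-adjoint `A`, `B` with
`‖A‖ ≤ a` and `‖B‖ ≤ a`. -/
theorem stmt_15 (f : ℝ → ℂ) (hf : Continuous f)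
    (hyp : ∀ (H : Type) [NormedAddCommGroup H] [InnerProductSpace ℂ H] [CompleteSpace H]
      (A K : H →L[ℂ] H), IsSelfAdjoint A → IsSelfAdjoint K →
      ∃ C : ℝ, 0 ≤ C ∧ ∃ δ : ℝ, 0 < δ ∧ ∀ t : ℝ, |t| < δ →
        ‖cfc (fun z : ℂ => f z.re) (A + (t : ℂ) • K) -
            cfc (fun z : ℂ => f z.re) A‖ ≤ C * |t|) :
    ∀ a : ℝ, 0 < a → ∃ C : ℝ, 0 ≤ C ∧
      ∀ (H : Type) [NormedAddCommGroup H] [InnerProductSpace ℂ H] [CompleteSpace H]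
        (A B : H →L[ℂ] H), IsSelfAdjoint A → IsSelfAdjoint B → ‖A‖ ≤ a → ‖B‖ ≤ a →
        ‖cfc (fun z : ℂ => f z.re) A - cfc (fun z : ℂ => f z.re) B‖ ≤ C * ‖A - B‖ := by
  intro a _
  by_contra! hcon
  choose E _ _ _ A B hA hB hAa hBa hlt using fun n : ℕ => hcon n n.cast_nonneg
  have hE : ∀ n, Nontrivial (E n) := fun n => by
    obtain ⟨x, hx⟩ := DFunLike.ne_iff.1 <| norm_pos_iff.1 <|
      (mul_nonneg n.cast_nonneg (norm_nonneg _)).trans_lt (hlt n)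
    exact nontrivial_of_ne _ _ hx
  obtain ⟨C, -, hC⟩ :=
    HasBoundedDifferenceQuotients.exists_lipschitz_bound hyp hf A B hA hB hAa hBa
  obtain ⟨n, hn⟩ := exists_nat_gt C
  exact (hlt n).not_ge ((hC n).trans (mul_le_mul_of_nonneg_right hn.le (norm_nonneg _)))
end

section
/- Schur multipliers arising from Hilbert-space factorizations: Let S and T be arbitrary (index) sets, let 𝓗 be a complex Hilbert space, and let {u_s}_{s∈S} and {v_t}_{t∈T} be families of vectors in 𝓗 with ‖u_s‖·‖v_t‖ ≤ 1 for all s ∈ S, t ∈ T. Let A be a bounded linear operator from ℓ²(T) to ℓ²(S), with matrix entries a(s,t) = ⟨A δ_t, δ_s⟩ where δ_t, δ_s are the standard basis vectors. Then there exists a bounded linear operator B from ℓ²(T) to ℓ²(S) with ‖B‖ ≤ ‖A‖ whose matrix entries are ⟨B δ_t, δ_s⟩ = ⟨u_s, v_t⟩·a(s,t) for all s ∈ S, t ∈ T; in other words, the matrix Φ(s,t) = ⟨u_s, v_t⟩ is a Schur multiplier of norm at most 1. -/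
open scoped InnerProductSpace

/-!
Rescaling `u` by some `c > 0` and `v` by `c⁻¹` (possible as soon as `Φ ≢ 0`) makes all the
vectors of norm at most `1`, and embedding `𝓗` isometrically into some `ℓ²(ι)` turns them
into square-summable sequences. The map `V_u : ℓ²(S) → ℓ²(ι, ℓ²(S))`,
`y ↦ (s ↦ u_s(i) y_s)_i`, i.e. `δ_s ↦ u_s ⊗ δ_s`, is then a contraction, and
`B = V_u* (A ⊗ 1) V_v` has norm at most `‖A‖` and entries
`⟪V_u δ_s, (A ⊗ 1) V_v δ_t⟫ = ∑ᵢ conj (u_s(i)) v_t(i) a(s,t) = ⟪u_s, v_t⟫ a(s,t)`.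
-/

open scoped ENNReal lp

noncomputable section

namespace lp

section NormSq

variable {α : Type*} {E : α → Type*} [∀ a, NormedAddCommGroup (E a)]

theorem hasSum_norm_sq (f : lp E 2) : HasSum (fun a => ‖f a‖ ^ 2) (‖f‖ ^ 2) := by
  simpa [Real.rpow_two] using lp.hasSum_norm (p := 2) (by norm_num) f

theorem sum_norm_sq_le_norm_sq (f : lp E 2) (s : Finset α) : ∑ a ∈ s, ‖f a‖ ^ 2 ≤ ‖f‖ ^ 2 :=
  sum_le_hasSum s (fun _ _ => sq_nonneg _) (hasSum_norm_sq f)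

theorem norm_le_of_forall_sum_norm_sq_le {C : ℝ} (hC : 0 ≤ C) {f : lp E 2}
    (hf : ∀ s : Finset α, ∑ a ∈ s, ‖f a‖ ^ 2 ≤ C ^ 2) : ‖f‖ ≤ C :=
  norm_le_of_forall_sum_le (by norm_num) hC (by simpa [Real.rpow_two] using hf)

theorem memℓp_two_of_forall_sum_norm_sq_le {C : ℝ} {f : ∀ a, E a}
    (hf : ∀ s : Finset α, ∑ a ∈ s, ‖f a‖ ^ 2 ≤ C) : Memℓp f 2 :=
  memℓp_gen' (by simpa [Real.rpow_two] using hf)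

end NormSq

section Column

variable {𝕜 : Type*} [NontriviallyNormedField 𝕜] {ι E F : Type*}
  [NormedAddCommGroup E] [NormedSpace 𝕜 E] [NormedAddCommGroup F] [NormedSpace 𝕜 F]

section

variable (L : ι → E →ₗ[𝕜] F) {C : ℝ} (hC : 0 ≤ C)
  (hL : ∀ x (s : Finset ι), ∑ i ∈ s, ‖L i x‖ ^ 2 ≤ (C * ‖x‖) ^ 2)

def columnL : E →L[𝕜] ℓ²(ι, F) :=
  LinearMap.mkContinuous
    { toFun := fun x => ⟨fun i => L i x, memℓp_two_of_forall_sum_norm_sq_le (hL x)⟩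
      map_add' := fun x y => lp.ext <| funext fun i => map_add (L i) x y
      map_smul' := fun c x => lp.ext <| funext fun i => map_smul (L i) c x }
    C fun x => norm_le_of_forall_sum_norm_sq_le (by positivity) (hL x)

@[simp]
theorem columnL_apply_apply (x : E) (i : ι) : columnL L hC hL x i = L i x :=
  rfl

theorem norm_columnL_le : ‖columnL L hC hL‖ ≤ C :=
  LinearMap.mkContinuous_norm_le _ hC _

end

/-- `A ⊗ 1`, with `ℓ²(ι) ⊗ E` realised as `ℓ²(ι, E)`. -/
def ampliation (A : E →L[𝕜] F) : ℓ²(ι, E) →L[𝕜] ℓ²(ι, F) :=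
  columnL (fun i => A.toLinearMap ∘ₗ evalₗ _ 2 i) (norm_nonneg A) fun x s =>
    calc ∑ i ∈ s, ‖A (x i)‖ ^ 2 ≤ ∑ i ∈ s, (‖A‖ * ‖x i‖) ^ 2 := by
          gcongr with i; exact A.le_opNorm _
      _ = ‖A‖ ^ 2 * ∑ i ∈ s, ‖x i‖ ^ 2 := by simp only [mul_pow, Finset.mul_sum]
      _ ≤ (‖A‖ * ‖x‖) ^ 2 := by
          rw [mul_pow]; gcongr; exact sum_norm_sq_le_norm_sq x s

@[simp]
theorem ampliation_apply_apply (A : E →L[𝕜] F) (x : ℓ²(ι, E)) (i : ι) :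
    ampliation A x i = A (x i) :=
  rfl

theorem norm_ampliation_le (A : E →L[𝕜] F) : ‖(ampliation A : ℓ²(ι, E) →L[𝕜] _)‖ ≤ ‖A‖ :=
  norm_columnL_le _ _ _

end Column

section Diagonal

variable {𝕜 : Type*} [NontriviallyNormedField 𝕜] {α ι E : Type*}
  [NormedAddCommGroup E] [NormedSpace 𝕜 E] {p : ℝ≥0∞}

theorem _root_.Memℓp.smul_of_infty {c : α → 𝕜} {f : α → E} (hc : Memℓp c ∞)
    (hf : Memℓp f p) : Memℓp (c • f) p := by
  obtain ⟨K, hK⟩ := hc.bddAbove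
  refine (hf.norm.const_mul K).mono fun a => ?_
  rw [show (c • f) a = c a • f a from rfl, norm_smul]
  exact mul_le_mul_of_nonneg_right (hK ⟨a, rfl⟩) (norm_nonneg _)

def diagMul (c : α → 𝕜) (hc : Memℓp c ∞) : ℓ^p(α, E) →ₗ[𝕜] ℓ^p(α, E) where
  toFun y := ⟨c • ⇑y, hc.smul_of_infty (lp.memℓp y)⟩
  map_add' x y := lp.ext <| funext fun a => smul_add (c a) (x a) (y a)
  map_smul' k x := lp.ext <| funext fun a => smul_comm (c a) k (x a)

@[simp]
theorem diagMul_apply_apply (c : α → 𝕜) (hc : Memℓp c ∞) (y : ℓ^p(α, E)) (a : α) :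
    diagMul c hc y a = c a • y a :=
  rfl

theorem diagMul_single [DecidableEq α] (c : α → 𝕜) (hc : Memℓp c ∞) (a : α) (x : E) :
    diagMul c hc (lp.single p a x) = lp.single p a (c a • x) := by
  ext b
  by_cases h : b = a
  · subst h; simp
  · simp [h]

theorem memℓp_infty_apply (u : ι → ℓ²(α, 𝕜)) (hu : ∀ i, ‖u i‖ ≤ 1) (a : α) :
    Memℓp (fun i => u i a) ∞ :=
  memℓp_infty ⟨1, by
    rintro _ ⟨i, rfl⟩; exact (norm_apply_le_norm two_ne_zero (u i) a).trans (hu i)⟩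

variable (u : α → ℓ²(ι, 𝕜)) (hu : ∀ a, ‖u a‖ ≤ 1)

theorem sum_norm_sq_diagMul_le (y : ℓ²(α, E)) (s : Finset ι) :
    ∑ i ∈ s, ‖diagMul (fun a => u a i) (memℓp_infty_apply u hu i) y‖ ^ 2 ≤ ‖y‖ ^ 2 := by
  have hle : ∀ a, (∑ i ∈ s, ‖u a i‖ ^ 2) * ‖y a‖ ^ 2 ≤ ‖y a‖ ^ 2 := fun a =>
    mul_le_of_le_one_left (sq_nonneg _) <| (sum_norm_sq_le_norm_sq (u a) s).trans <|
      pow_le_one₀ (norm_nonneg _) (hu a)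
  have hrow : ∀ i, HasSum (fun a => ‖u a i‖ ^ 2 * ‖y a‖ ^ 2)
      (‖diagMul (fun a => u a i) (memℓp_infty_apply u hu i) y‖ ^ 2) := fun i => by
    simpa only [diagMul_apply_apply, norm_smul, mul_pow] using
      hasSum_norm_sq (diagMul (fun a => u a i) (memℓp_infty_apply u hu i) y)
  have hy := hasSum_norm_sq y
  calc ∑ i ∈ s, ‖diagMul (fun a => u a i) (memℓp_infty_apply u hu i) y‖ ^ 2
      = ∑ i ∈ s, ∑' a, ‖u a i‖ ^ 2 * ‖y a‖ ^ 2 :=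
        Finset.sum_congr rfl fun i _ => (hrow i).tsum_eq.symm
    _ = ∑' a, (∑ i ∈ s, ‖u a i‖ ^ 2) * ‖y a‖ ^ 2 := by
        simp only [Finset.sum_mul]
        exact (Summable.tsum_finsetSum fun i _ => (hrow i).summable).symm
    _ ≤ ∑' a, ‖y a‖ ^ 2 :=
        (hy.summable.of_nonneg_of_le (fun a => by positivity) hle).tsum_le_tsum hle hy.summable
    _ = ‖y‖ ^ 2 := hy.tsum_eq

/-- `single a x ↦ u_a ⊗ single a x`, with `ℓ²(ι) ⊗ ℓ²(α, E)` realised as `ℓ²(ι, ℓ²(α, E))`. -/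
def diagTensor : ℓ²(α, E) →L[𝕜] ℓ²(ι, ℓ²(α, E)) :=
  columnL (fun i => diagMul (fun a => u a i) (memℓp_infty_apply u hu i)) zero_le_one
    fun y s => by simpa only [one_mul] using sum_norm_sq_diagMul_le u hu y s

theorem norm_diagTensor_le : ‖(diagTensor u hu : ℓ²(α, E) →L[𝕜] _)‖ ≤ 1 :=
  norm_columnL_le _ _ _

theorem diagTensor_single_apply [DecidableEq α] (a : α) (x : E) (i : ι) :
    diagTensor u hu (lp.single 2 a x) i = lp.single 2 a (u a i • x) :=
  diagMul_single _ _ a x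

end Diagonal

end lp

section Schur

open lp ContinuousLinearMap

variable {𝕜 : Type*} [RCLike 𝕜] {ι S T : Type*}
  (u : S → ℓ²(ι, 𝕜)) (v : T → ℓ²(ι, 𝕜)) (hu : ∀ s, ‖u s‖ ≤ 1) (hv : ∀ t, ‖v t‖ ≤ 1)
  (A : ℓ²(T, 𝕜) →L[𝕜] ℓ²(S, 𝕜))

def schurMul : ℓ²(T, 𝕜) →L[𝕜] ℓ²(S, 𝕜) :=
  adjoint (diagTensor u hu) ∘L ampliation A ∘L diagTensor v hv

theorem norm_schurMul_le : ‖schurMul u v hu hv A‖ ≤ ‖A‖ := by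
  have hU := norm_diagTensor_le (E := 𝕜) u hu
  have hV := norm_diagTensor_le (E := 𝕜) v hv
  have hA := norm_ampliation_le (ι := ι) A
  calc ‖schurMul u v hu hv A‖
      ≤ ‖adjoint (diagTensor (E := 𝕜) u hu)‖ * (‖ampliation (ι := ι) A‖ *
          ‖diagTensor (E := 𝕜) v hv‖) :=
        (opNorm_comp_le _ _).trans <| by gcongr; exact opNorm_comp_le _ _
    _ ≤ 1 * (‖A‖ * 1) := by rw [LinearIsometryEquiv.norm_map]; gcongr
    _ = ‖A‖ := by ring

theorem inner_single_schurMul_single [DecidableEq S] [DecidableEq T] (s : S) (t : T) :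
    ⟪lp.single 2 s (1 : 𝕜), schurMul u v hu hv A (lp.single 2 t (1 : 𝕜))⟫_𝕜 =
      ⟪u s, v t⟫_𝕜 * ⟪lp.single 2 s (1 : 𝕜), A (lp.single 2 t (1 : 𝕜))⟫_𝕜 := by
  rw [schurMul, comp_apply, comp_apply, adjoint_inner_right, lp.inner_eq_tsum, lp.inner_eq_tsum,
    ← tsum_mul_right]
  refine tsum_congr fun i => ?_
  rw [ampliation_apply_apply, diagTensor_single_apply, diagTensor_single_apply, lp.single_smul,
    lp.single_smul, map_smul, inner_smul_left, inner_smul_right, RCLike.inner_apply']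
  ring

end Schur

universe w

theorem exists_linearIsometry_lp (𝕜 : Type*) (H : Type w) [RCLike 𝕜] [NormedAddCommGroup H]
    [InnerProductSpace 𝕜 H] : ∃ ι : Type w, Nonempty (H →ₗᵢ[𝕜] ℓ²(ι, 𝕜)) := by
  obtain ⟨w, b, -⟩ := exists_hilbertBasis 𝕜 (UniformSpace.Completion H)
  exact ⟨w, ⟨b.repr.toLinearIsometry.comp UniformSpace.Completion.toComplₗᵢ⟩⟩

theorem exists_schurMul_of_norm_le_one {𝕜 H S T : Type*} [RCLike 𝕜] [NormedAddCommGroup H]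
    [InnerProductSpace 𝕜 H] [DecidableEq S] [DecidableEq T] (u : S → H) (v : T → H)
    (hu : ∀ s, ‖u s‖ ≤ 1) (hv : ∀ t, ‖v t‖ ≤ 1) (A : ℓ²(T, 𝕜) →L[𝕜] ℓ²(S, 𝕜)) :
    ∃ B : ℓ²(T, 𝕜) →L[𝕜] ℓ²(S, 𝕜), ‖B‖ ≤ ‖A‖ ∧
      ∀ (s : S) (t : T),
        ⟪lp.single 2 s (1 : 𝕜), B (lp.single 2 t (1 : 𝕜))⟫_𝕜 =
          ⟪u s, v t⟫_𝕜 * ⟪lp.single 2 s (1 : 𝕜), A (lp.single 2 t (1 : 𝕜))⟫_𝕜 := by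
  obtain ⟨ι, ⟨e⟩⟩ := exists_linearIsometry_lp 𝕜 H
  have heu : ∀ s, ‖e (u s)‖ ≤ 1 := fun s => (e.norm_map _).trans_le (hu s)
  have hev : ∀ t, ‖e (v t)‖ ≤ 1 := fun t => (e.norm_map _).trans_le (hv t)
  refine ⟨schurMul (e ∘ u) (e ∘ v) heu hev A, norm_schurMul_le _ _ heu hev A, fun s t => ?_⟩
  rw [inner_single_schurMul_single, Function.comp_apply, Function.comp_apply, e.inner_map_map]

theorem exists_pos_mul_le_one_and_le {S T : Type*} {a : S → ℝ} {b : T → ℝ} (ha : ∀ s, 0 ≤ a s)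
    (hab : ∀ s t, a s * b t ≤ 1) {s₀ : S} {t₀ : T} (ha₀ : 0 < a s₀) (hb₀ : 0 < b t₀) :
    ∃ c > 0, (∀ s, c * a s ≤ 1) ∧ ∀ t, b t ≤ c := by
  have hbdd : BddAbove (Set.range b) :=
    ⟨1 / a s₀, by rintro _ ⟨t, rfl⟩; rw [le_div_iff₀ ha₀, mul_comm]; exact hab s₀ t⟩
  have : Nonempty T := ⟨t₀⟩
  refine ⟨⨆ t, b t, hb₀.trans_le (le_ciSup hbdd t₀), fun s => ?_, le_ciSup hbdd⟩
  rw [Real.iSup_mul_of_nonneg (ha s)]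
  exact ciSup_le fun t => (mul_comm _ _).trans_le (hab s t)

end

/-- Schur multipliers arising from Hilbert-space factorizations: if
`{u_s}_{s ∈ S}` and `{v_t}_{t ∈ T}` are families in a complex Hilbert space
with `‖u_s‖ * ‖v_t‖ ≤ 1`, and `A : ℓ²(T) → ℓ²(S)` is a bounded operator with
matrix entries `a(s,t) = ⟨δ_s, A δ_t⟩`, then there is a bounded operator
`B : ℓ²(T) → ℓ²(S)` with `‖B‖ ≤ ‖A‖` whose matrix entries are
`⟨u_s, v_t⟩ * a(s,t)`; i.e. `Φ(s,t) = ⟨u_s, v_t⟩` is a Schur multiplier of norm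
at most `1`. -/
theorem stmt_16 {S T : Type*} [DecidableEq S] [DecidableEq T]
    {𝓗 : Type*} [NormedAddCommGroup 𝓗] [InnerProductSpace ℂ 𝓗]
    (u : S → 𝓗) (v : T → 𝓗) (huv : ∀ (s : S) (t : T), ‖u s‖ * ‖v t‖ ≤ 1)
    (A : lp (fun _ : T => ℂ) 2 →L[ℂ] lp (fun _ : S => ℂ) 2) :
    ∃ B : lp (fun _ : T => ℂ) 2 →L[ℂ] lp (fun _ : S => ℂ) 2, ‖B‖ ≤ ‖A‖ ∧
      ∀ (s : S) (t : T),
        ⟪lp.single 2 s (1 : ℂ), B (lp.single 2 t (1 : ℂ))⟫_ℂ =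
          ⟪u s, v t⟫_ℂ * ⟪lp.single 2 s (1 : ℂ), A (lp.single 2 t (1 : ℂ))⟫_ℂ := by
  by_cases hΦ : ∀ s t, ⟪u s, v t⟫_ℂ = 0
  · exact ⟨0, by simp, fun s t => by simp [hΦ]⟩
  push Not at hΦ
  obtain ⟨s₀, t₀, h₀⟩ := hΦ
  obtain ⟨c, hc, hcu, hcv⟩ := exists_pos_mul_le_one_and_le (fun s => norm_nonneg (u s)) huv
    (s₀ := s₀) (t₀ := t₀) (norm_pos_iff.2 fun h => h₀ (by simp [h]))
    (norm_pos_iff.2 fun h => h₀ (by simp [h]))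
  have hnorm : ‖(c : ℂ)‖ = c := by simp [hc.le]
  obtain ⟨B, hB, hBA⟩ := exists_schurMul_of_norm_le_one (fun s => (c : ℂ) • u s)
    (fun t => (c : ℂ)⁻¹ • v t) (fun s => by rw [norm_smul, hnorm]; exact hcu s)
    (fun t => by rw [norm_smul, norm_inv, hnorm]; exact inv_mul_le_one_of_le₀ (hcv t) hc.le) A
  refine ⟨B, hB, fun s t => ?_⟩
  rw [hBA, inner_smul_left, inner_smul_right, Complex.conj_ofReal,
    mul_inv_cancel_left₀ (by exact_mod_cast hc.ne')]
end
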